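/- Soundness invariant of the bucketing algorithm. In every reachable configuration of the bucketing system, every revealed collection A satisfies: every allegation a ∈ A has threshold t_a ≤ |A|. In particular, whenever a set of allegations is revealed, the reveal threshold of each of them is satisfied by the size of the revealed set. -/
import Mathlib


/-- An allegation: a distinct identifier, a metadata value, and a reveal threshold. -/
structure Allegation where
  id : ℕ
  md : ℕ
  thr : ℕ
deriving DecidableEq

/-- A collection: a finite set of allegations, a finite set of occupied buckets,
and a flag indicating whether the collection has been revealed. -/
structure Collection where
  allegs : Finset Allegation
  buckets : Finset ℕ
  revealed : Bool
deriving DecidableEq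

namespace Collection
/-- `Min(A)`: the least occupied bucket. -/
noncomputable def bmin (A : Collection) : ℕ := sInf (A.buckets : Set ℕ)
/-- `Max(A)`: the greatest occupied bucket. -/
noncomputable def bmax (A : Collection) : ℕ := sSup (A.buckets : Set ℕ)
end Collection

/-- A configuration is a finite set of collections. -/
abbrev Config := Finset Collection

/-- The transition rules R1–R5 of the bucketing algorithm. -/
inductive Step : Config → Config → Prop
  /-- R1 (file): a new allegation `a` (with a fresh identifier and threshold `≥ 2`)
  is added as a fresh unrevealed singleton collection with bucket set `{t_a - 1}`. -/
  | file (C : Config) (a : Allegation)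
      (hthr : 2 ≤ a.thr)
      (hfresh : ∀ B ∈ C, ∀ b ∈ B.allegs, b.id ≠ a.id) :
      Step C (insert ⟨{a}, {a.thr - 1}, false⟩ C)
  /-- R2 (copy): if `A` is unrevealed, `Min(A) ≥ 1` and every `a ∈ A` has
  `t_a < Min(A) + |A|`, then `Min(A) - 1` is added to `buckets(A)`. -/
  | copy (C : Config) (A : Collection) (hA : A ∈ C)
      (hrev : A.revealed = false)
      (hmin : 1 ≤ A.bmin)
      (hthr : ∀ a ∈ A.allegs, a.thr < A.bmin + A.allegs.card) :
      Step C (insert ⟨A.allegs, insert (A.bmin - 1) A.buckets, false⟩ (C.erase A))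
  /-- R3 (coalesce): two distinct unrevealed collections with overlapping bucket
  sets and pairwise matching allegations coalesce. -/
  | coalesce (C : Config) (A B : Collection)
      (hA : A ∈ C) (hB : B ∈ C) (hne : A ≠ B)
      (hArev : A.revealed = false) (hBrev : B.revealed = false)
      (hover : (A.buckets ∩ B.buckets).Nonempty)
      (hmatch : ∀ a ∈ A.allegs, ∀ b ∈ B.allegs, a.md = b.md) :
      Step C (insert ⟨A.allegs ∪ B.allegs, A.buckets ∪ B.buckets, false⟩
        ((C.erase A).erase B))
  /-- R4 (reveal): an unrevealed collection occupying bucket 0 is marked revealed;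
  its bucket set becomes `{0, 1, …, |A|}`. -/
  | reveal (C : Config) (A : Collection) (hA : A ∈ C)
      (hrev : A.revealed = false) (h0 : (0 : ℕ) ∈ A.buckets) :
      Step C (insert ⟨A.allegs, Finset.range (A.allegs.card + 1), true⟩ (C.erase A))
  /-- R5 (absorb): a revealed collection absorbs an unrevealed one with overlapping
  bucket set and matching allegations; the result is revealed with bucket set
  `{0, 1, …, |A ∪ B|}`. -/
  | absorb (C : Config) (A B : Collection)
      (hA : A ∈ C) (hB : B ∈ C)
      (hArev : A.revealed = true) (hBrev : B.revealed = false)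
      (hover : (A.buckets ∩ B.buckets).Nonempty)
      (hmatch : ∀ a ∈ A.allegs, ∀ b ∈ B.allegs, a.md = b.md) :
      Step C (insert ⟨A.allegs ∪ B.allegs,
        Finset.range ((A.allegs ∪ B.allegs).card + 1), true⟩
        ((C.erase A).erase B))

/-- A configuration is reachable if it is obtained from the empty configuration
by finitely many applications of R1–R5. -/
def Reachable (C : Config) : Prop := Relation.ReflTransGen Step ∅ C

/-- A configuration is saturated if none of the rules R2–R5 is applicable. -/
def Saturated (C : Config) : Prop :=
  (¬ ∃ A ∈ C, A.revealed = false ∧ 1 ≤ A.bmin ∧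
      ∀ a ∈ A.allegs, a.thr < A.bmin + A.allegs.card) ∧
  (¬ ∃ A ∈ C, ∃ B ∈ C, A ≠ B ∧ A.revealed = false ∧ B.revealed = false ∧
      (A.buckets ∩ B.buckets).Nonempty ∧
      ∀ a ∈ A.allegs, ∀ b ∈ B.allegs, a.md = b.md) ∧
  (¬ ∃ A ∈ C, A.revealed = false ∧ (0 : ℕ) ∈ A.buckets) ∧
  (¬ ∃ A ∈ C, ∃ B ∈ C, A.revealed = true ∧ B.revealed = false ∧
      (A.buckets ∩ B.buckets).Nonempty ∧
      ∀ a ∈ A.allegs, ∀ b ∈ B.allegs, a.md = b.md)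

/-- The set of all allegations filed so far (the union of all collections). -/
def filedAllegs (C : Config) : Finset Allegation := C.sup Collection.allegs


/-- The inductive invariant. -/
def SAEInv (C : Config) : Prop :=
  (∀ A ∈ C, ∀ B ∈ C, A ≠ B → Disjoint A.allegs B.allegs) ∧
  (∀ A ∈ C, A.buckets.Nonempty) ∧
  (∀ A ∈ C, A.revealed = false →
      (∀ a ∈ A.allegs, ∀ b ∈ A.buckets, a.thr ≤ b + A.allegs.card) ∧
      (∀ b ∈ A.buckets, ∃ a ∈ A.allegs, b + 1 ≤ a.thr)) ∧
  (∀ A ∈ C, A.revealed = true →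
      (∀ a ∈ A.allegs, a.thr ≤ A.allegs.card) ∧
      (∀ b ∈ A.buckets, b ≤ A.allegs.card))

lemma bmin_mem {A : Collection} (h : A.buckets.Nonempty) : A.bmin ∈ A.buckets := by
  have : A.bmin ∈ (A.buckets : Set ℕ) := Nat.sInf_mem (by exact_mod_cast h)
  exact_mod_cast this

lemma inv_step {C C' : Config} (h : Step C C') (hI : SAEInv C) : SAEInv C' := by
  obtain ⟨hdisj, hbne, hunrev, hrev⟩ := hI
  cases h with
  | file a hthr hfresh =>
      refine ⟨?_, ?_, ?_, ?_⟩
      · intro P hP Q hQ hPQ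
        rw [Finset.mem_insert] at hP hQ
        have key : ∀ Q' ∈ C, Disjoint ({a} : Finset Allegation) Q'.allegs := by
          intro Q' hQ'
          rw [Finset.disjoint_left]
          intro x hx hx'
          rw [Finset.mem_singleton] at hx
          exact hfresh Q' hQ' x hx' (by rw [hx])
        rcases hP with rfl | hP
        · rcases hQ with rfl | hQ
          · exact absurd rfl hPQ
          · exact key Q hQ
        · rcases hQ with rfl | hQ
          · exact (key P hP).symm
          · exact hdisj P hP Q hQ hPQ
      · intro A hA
        rw [Finset.mem_insert] at hA
        rcases hA with rfl | hA
        · exact ⟨a.thr - 1, by simp⟩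
        · exact hbne A hA
      · intro A hA hArev
        rw [Finset.mem_insert] at hA
        rcases hA with rfl | hA
        · constructor
          · intro x hx b hb
            simp only [Finset.mem_singleton] at hx hb
            subst hx; subst hb
            simp only [Finset.card_singleton]
            omega
          · intro b hb
            simp only [Finset.mem_singleton] at hb
            subst hb
            exact ⟨a, Finset.mem_singleton_self a, by omega⟩
        · exact hunrev A hA hArev
      · intro A hA hArev
        rw [Finset.mem_insert] at hA
        rcases hA with rfl | hA
        · simp at hArev
        · exact hrev A hA hArev
  | copy A hA hArev hmin hthr =>
      have hAC : ∀ Q ∈ C.erase A, Q ≠ A ∧ Q ∈ C := by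
        intro Q hQ
        exact ⟨(Finset.mem_erase.mp hQ).1, (Finset.mem_erase.mp hQ).2⟩
      refine ⟨?_, ?_, ?_, ?_⟩
      · intro P hP Q hQ hPQ
        rw [Finset.mem_insert] at hP hQ
        rcases hP with rfl | hP
        · rcases hQ with rfl | hQ
          · exact absurd rfl hPQ
          · exact hdisj A hA Q (hAC Q hQ).2 (Ne.symm (hAC Q hQ).1)
        · rcases hQ with rfl | hQ
          · exact hdisj P (hAC P hP).2 A hA (hAC P hP).1
          · exact hdisj P (hAC P hP).2 Q (hAC Q hQ).2 hPQ
      · intro P hP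
        rw [Finset.mem_insert] at hP
        rcases hP with rfl | hP
        · exact ⟨A.bmin - 1, Finset.mem_insert_self _ _⟩
        · exact hbne P (hAC P hP).2
      · intro P hP hPrev
        rw [Finset.mem_insert] at hP
        rcases hP with rfl | hP
        · obtain ⟨hU1, hU2⟩ := hunrev A hA hArev
          have hminmem : A.bmin ∈ A.buckets := bmin_mem (hbne A hA)
          constructor
          · intro x hx b hb
            rw [Finset.mem_insert] at hb
            rcases hb with rfl | hb
            · have := hthr x hx
              simp only
              omega
            · exact hU1 x hx b hb
          · intro b hb
            rw [Finset.mem_insert] at hb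
            rcases hb with rfl | hb
            · obtain ⟨w, hw, hw'⟩ := hU2 A.bmin hminmem
              exact ⟨w, hw, by omega⟩
            · exact hU2 b hb
        · exact hunrev P (hAC P hP).2 hPrev
      · intro P hP hPrev
        rw [Finset.mem_insert] at hP
        rcases hP with rfl | hP
        · simp at hPrev
        · exact hrev P (hAC P hP).2 hPrev
  | coalesce A B hA hB hne hArev hBrev hover hmatch =>
      obtain ⟨c, hc⟩ := hover
      rw [Finset.mem_inter] at hc
      have hABdisj : Disjoint A.allegs B.allegs := hdisj A hA B hB hne
      have hcardU : (A.allegs ∪ B.allegs).card = A.allegs.card + B.allegs.card :=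
        Finset.card_union_of_disjoint hABdisj
      obtain ⟨hU1A, hU2A⟩ := hunrev A hA hArev
      obtain ⟨hU1B, hU2B⟩ := hunrev B hB hBrev
      have hAC : ∀ Q ∈ (C.erase A).erase B, Q ≠ A ∧ Q ≠ B ∧ Q ∈ C := by
        intro Q hQ
        rw [Finset.mem_erase, Finset.mem_erase] at hQ
        exact ⟨hQ.2.1, hQ.1, hQ.2.2⟩
      refine ⟨?_, ?_, ?_, ?_⟩
      · intro P hP Q hQ hPQ
        rw [Finset.mem_insert] at hP hQ
        have key : ∀ Q ∈ (C.erase A).erase B,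
            Disjoint (A.allegs ∪ B.allegs) Q.allegs := by
          intro Q hQ
          obtain ⟨h1, h2, h3⟩ := hAC Q hQ
          exact Finset.disjoint_union_left.mpr
            ⟨hdisj A hA Q h3 (Ne.symm h1), hdisj B hB Q h3 (Ne.symm h2)⟩
        rcases hP with rfl | hP
        · rcases hQ with rfl | hQ
          · exact absurd rfl hPQ
          · exact key Q hQ
        · rcases hQ with rfl | hQ
          · exact (key P hP).symm
          · exact hdisj P (hAC P hP).2.2 Q (hAC Q hQ).2.2 hPQ
      · intro P hP
        rw [Finset.mem_insert] at hP
        rcases hP with rfl | hP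
        · exact ⟨c, Finset.mem_union_left _ hc.1⟩
        · exact hbne P (hAC P hP).2.2
      · intro P hP hPrev
        rw [Finset.mem_insert] at hP
        rcases hP with rfl | hP
        · constructor
          · intro x hx b hb
            simp only [hcardU]
            rw [Finset.mem_union] at hx hb
            rcases hx with hx | hx <;> rcases hb with hb | hb
            · have := hU1A x hx b hb; omega
            · -- x ∈ A, b ∈ B.buckets
              have h1 := hU1A x hx c hc.1
              obtain ⟨w, hw, hw'⟩ := hU2B c hc.2
              have h2 := hU1B w hw b hb
              omega
            · -- x ∈ B, b ∈ A.buckets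
              have h1 := hU1B x hx c hc.2
              obtain ⟨w, hw, hw'⟩ := hU2A c hc.1
              have h2 := hU1A w hw b hb
              omega
            · have := hU1B x hx b hb; omega
          · intro b hb
            rw [Finset.mem_union] at hb
            rcases hb with hb | hb
            · obtain ⟨w, hw, hw'⟩ := hU2A b hb
              exact ⟨w, Finset.mem_union_left _ hw, hw'⟩
            · obtain ⟨w, hw, hw'⟩ := hU2B b hb
              exact ⟨w, Finset.mem_union_right _ hw, hw'⟩
        · exact hunrev P (hAC P hP).2.2 hPrev
      · intro P hP hPrev
        rw [Finset.mem_insert] at hP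
        rcases hP with rfl | hP
        · simp at hPrev
        · exact hrev P (hAC P hP).2.2 hPrev
  | reveal A hA hArev h0 =>
      obtain ⟨hU1, hU2⟩ := hunrev A hA hArev
      have hAC : ∀ Q ∈ C.erase A, Q ≠ A ∧ Q ∈ C := by
        intro Q hQ
        exact ⟨(Finset.mem_erase.mp hQ).1, (Finset.mem_erase.mp hQ).2⟩
      refine ⟨?_, ?_, ?_, ?_⟩
      · intro P hP Q hQ hPQ
        rw [Finset.mem_insert] at hP hQ
        rcases hP with rfl | hP
        · rcases hQ with rfl | hQ
          · exact absurd rfl hPQ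
          · exact hdisj A hA Q (hAC Q hQ).2 (Ne.symm (hAC Q hQ).1)
        · rcases hQ with rfl | hQ
          · exact hdisj P (hAC P hP).2 A hA (hAC P hP).1
          · exact hdisj P (hAC P hP).2 Q (hAC Q hQ).2 hPQ
      · intro P hP
        rw [Finset.mem_insert] at hP
        rcases hP with rfl | hP
        · exact ⟨0, by simp⟩
        · exact hbne P (hAC P hP).2
      · intro P hP hPrev
        rw [Finset.mem_insert] at hP
        rcases hP with rfl | hP
        · simp at hPrev
        · exact hunrev P (hAC P hP).2 hPrev
      · intro P hP hPrev
        rw [Finset.mem_insert] at hP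
        rcases hP with rfl | hP
        · constructor
          · intro x hx
            have := hU1 x hx 0 h0
            simpa using this
          · intro b hb
            simp only [Finset.mem_range] at hb
            simp only
            omega
        · exact hrev P (hAC P hP).2 hPrev
  | absorb A B hA hB hArev hBrev hover hmatch =>
      obtain ⟨c, hc⟩ := hover
      rw [Finset.mem_inter] at hc
      have hne : A ≠ B := by
        intro h; rw [h] at hArev; rw [hArev] at hBrev; exact absurd hBrev (by simp)
      have hABdisj : Disjoint A.allegs B.allegs := hdisj A hA B hB hne
      have hcardU : (A.allegs ∪ B.allegs).card = A.allegs.card + B.allegs.card :=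
        Finset.card_union_of_disjoint hABdisj
      obtain ⟨hV1, hV2⟩ := hrev A hA hArev
      obtain ⟨hU1B, hU2B⟩ := hunrev B hB hBrev
      have hAC : ∀ Q ∈ (C.erase A).erase B, Q ≠ A ∧ Q ≠ B ∧ Q ∈ C := by
        intro Q hQ
        rw [Finset.mem_erase, Finset.mem_erase] at hQ
        exact ⟨hQ.2.1, hQ.1, hQ.2.2⟩
      refine ⟨?_, ?_, ?_, ?_⟩
      · intro P hP Q hQ hPQ
        rw [Finset.mem_insert] at hP hQ
        have key : ∀ Q ∈ (C.erase A).erase B,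
            Disjoint (A.allegs ∪ B.allegs) Q.allegs := by
          intro Q hQ
          obtain ⟨h1, h2, h3⟩ := hAC Q hQ
          exact Finset.disjoint_union_left.mpr
            ⟨hdisj A hA Q h3 (Ne.symm h1), hdisj B hB Q h3 (Ne.symm h2)⟩
        rcases hP with rfl | hP
        · rcases hQ with rfl | hQ
          · exact absurd rfl hPQ
          · exact key Q hQ
        · rcases hQ with rfl | hQ
          · exact (key P hP).symm
          · exact hdisj P (hAC P hP).2.2 Q (hAC Q hQ).2.2 hPQ
      · intro P hP
        rw [Finset.mem_insert] at hP
        rcases hP with rfl | hP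
        · exact ⟨0, by simp⟩
        · exact hbne P (hAC P hP).2.2
      · intro P hP hPrev
        rw [Finset.mem_insert] at hP
        rcases hP with rfl | hP
        · simp at hPrev
        · exact hunrev P (hAC P hP).2.2 hPrev
      · intro P hP hPrev
        rw [Finset.mem_insert] at hP
        rcases hP with rfl | hP
        · constructor
          · intro x hx
            simp only [hcardU]
            rw [Finset.mem_union] at hx
            rcases hx with hx | hx
            · have := hV1 x hx; omega
            · have h1 := hU1B x hx c hc.2
              have h2 := hV2 c hc.1
              omega
          · intro b hb
            simp only [Finset.mem_range] at hb
            simp only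
            omega
        · exact hrev P (hAC P hP).2.2 hPrev

lemma inv_reachable {C : Config} (h : Reachable C) : SAEInv C := by
  induction h with
  | refl => exact ⟨by simp, by simp, by simp, by simp⟩
  | tail _ hstep ih => exact inv_step hstep ih

/-- **Soundness invariant.** In every reachable configuration, every revealed
collection `A` satisfies: every allegation `a ∈ A` has threshold `t_a ≤ |A|`. -/
theorem bucketing_soundness (C : Config) (hreach : Reachable C) :
    ∀ A ∈ C, A.revealed = true → ∀ a ∈ A.allegs, a.thr ≤ A.allegs.card := by
  exact fun A hA hArev => ((inv_reachable hreach).2.2.2 A hA hArev).1
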